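/- Long-term resilience outage probability under negative drift (Theorem 2, second part): If (Z i)_{i≥1} are independent identically distributed integrable real random variables with E[Z] < 0, then for every initial budget b0 > 0 and every threshold 0 < b_ε ≤ b0, the resilience outage probability converges and lim_{t→∞} α(t) = lim_{t→∞} ψ(t) = P(∃ t ≥ 1, S(t) ≥ b0), the probability of ultimate ruin. -/

import Mathlib

/-!
Ruin by time `t` increases to ultimate ruin, so `ψ t` converges by continuity of measure.
For `α`, the complement of the survival event contains ruin by time `t` and is contained in
ruin by time `t` together with `{b0 - bε < S t}`. By the strong law of large numbers
`S t / t → E[Z] < 0`, so `S t → -∞` almost surely and `P(b0 - bε < S t) → 0`;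
hence `α` is squeezed onto the same limit as `ψ`.
-/

open MeasureTheory ProbabilityTheory Filter Topology

section RandomWalk

variable {Ω : Type*} [MeasurableSpace Ω] {P : Measure Ω}

theorem ae_tendsto_sum_range_atBot_of_integral_neg {X : ℕ → Ω → ℝ} (hint : Integrable (X 0) P)
    (hindep : Pairwise (Function.onFun (IndepFun · · P) X))
    (hident : ∀ i, IdentDistrib (X i) (X 0) P P) (hmean : ∫ ω, X 0 ω ∂P < 0) :
    ∀ᵐ ω ∂P, Tendsto (fun n => ∑ i ∈ Finset.range n, X i ω) atTop atBot := by
  filter_upwards [strong_law_ae_real X hint hindep hident] with ω hω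
  have hmul : Tendsto (fun n : ℕ => (n : ℝ) * ((∑ i ∈ Finset.range n, X i ω) / n)) atTop atBot :=
    tendsto_natCast_atTop_atTop.atTop_mul_neg hmean hω
  refine hmul.congr' ?_
  filter_upwards [eventually_ne_atTop 0] with n hn
  field_simp

theorem tendsto_measure_lt_of_ae_tendsto_atBot [IsFiniteMeasure P] {ι : Type*} {L : Filter ι}
    [L.IsCountablyGenerated] {f : ι → Ω → ℝ} (hf_meas : ∀ n, Measurable (f n))
    (hf : ∀ᵐ ω ∂P, Tendsto (f · ω) L atBot) (c : ℝ) :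
    Tendsto (fun n => P {ω | c < f n ω}) L (𝓝 0) := by
  have h := tendsto_measure_of_ae_tendsto_indicator_of_isFiniteMeasure L (μ := P)
    (As := fun n => {ω | c < f n ω}) MeasurableSet.empty
    (fun n => measurableSet_lt measurable_const (hf_meas n)) ?_
  · rwa [measure_empty] at h
  filter_upwards [hf] with ω hω
  filter_upwards [hω.eventually_le_atBot c] with n hn
  simpa using hn

theorem tendsto_measure_setOf_exists_le_atTop (μ : Measure Ω) (p : ℕ → Ω → Prop) :
    Tendsto (fun t => μ {ω | ∃ i, 1 ≤ i ∧ i ≤ t ∧ p i ω}) atTop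
      (𝓝 (μ {ω | ∃ i, 1 ≤ i ∧ p i ω})) := by
  have hmono : Monotone fun t => {ω | ∃ i, 1 ≤ i ∧ i ≤ t ∧ p i ω} :=
    fun s t hst ω ⟨i, h1, hi, hp⟩ => ⟨i, h1, hi.trans hst, hp⟩
  have hunion : (⋃ t, {ω | ∃ i, 1 ≤ i ∧ i ≤ t ∧ p i ω}) = {ω | ∃ i, 1 ≤ i ∧ p i ω} := by
    ext ω
    simp only [Set.mem_iUnion, Set.mem_ofPred_eq]
    exact ⟨fun ⟨_, i, h1, _, hp⟩ => ⟨i, h1, hp⟩, fun ⟨i, h1, hp⟩ => ⟨i, i, h1, le_rfl, hp⟩⟩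
  rw [← hunion]
  exact tendsto_measure_iUnion_atTop hmono

end RandomWalk

section SurvivalEvent

variable {Ω : Type*} (S : ℕ → Ω → ℝ) (b c : ℝ) (t : ℕ)

theorem setOf_exists_le_subset_compl_survival :
    {ω | ∃ i, 1 ≤ i ∧ i ≤ t ∧ b ≤ S i ω} ⊆
      {ω | S t ω ≤ c ∧ ∀ i, 1 ≤ i → i ≤ t → S i ω < b}ᶜ :=
  fun _ ⟨i, h1, hi, hb⟩ hsurv => (hsurv.2 i h1 hi).not_ge hb

theorem compl_survival_subset :
    {ω | S t ω ≤ c ∧ ∀ i, 1 ≤ i → i ≤ t → S i ω < b}ᶜ ⊆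
      {ω | ∃ i, 1 ≤ i ∧ i ≤ t ∧ b ≤ S i ω} ∪ {ω | c < S t ω} := by
  intro ω hω
  simp only [Set.mem_compl_iff, Set.mem_ofPred_eq, not_and_or, not_le, not_forall, not_lt,
    exists_prop] at hω
  rcases hω with hend | ⟨i, h1, hi, hb⟩
  · exact Or.inr hend
  · exact Or.inl ⟨i, h1, hi, hb⟩

end SurvivalEvent

theorem long_term_resilience_outage_neg_drift_general
    {Ω : Type*} [MeasurableSpace Ω] (P : Measure Ω) [IsProbabilityMeasure P]
    (Z : ℕ → Ω → ℝ) (hZmeas : ∀ i, Measurable (Z i))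
    (hindep : ProbabilityTheory.iIndepFun Z P)
    (hident : ∀ i, ProbabilityTheory.IdentDistrib (Z i) (Z 1) P P)
    (hint : Integrable (Z 1) P)
    (hmean : ∫ ω, Z 1 ω ∂P < 0)
    (S : ℕ → Ω → ℝ) (hS : ∀ t ω, S t ω = ∑ i ∈ Finset.Icc 1 t, Z i ω)
    (b0 bε : ℝ)
    (ψ : ℕ → ENNReal) (hψ : ∀ t, ψ t = P {ω | ∃ i, 1 ≤ i ∧ i ≤ t ∧ b0 ≤ S i ω})
    (α : ℕ → ENNReal)
    (hα : ∀ t, α t = 1 - P {ω | S t ω ≤ b0 - bε ∧ ∀ i, 1 ≤ i → i ≤ t → S i ω < b0}) :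
    Tendsto α atTop (nhds (P {ω | ∃ t, 1 ≤ t ∧ b0 ≤ S t ω})) ∧
    Tendsto ψ atTop (nhds (P {ω | ∃ t, 1 ≤ t ∧ b0 ≤ S t ω})) := by
  have hS_range : ∀ t ω, S t ω = ∑ i ∈ Finset.range t, Z (i + 1) ω := fun t ω => by
    rw [hS, Finset.range_eq_Ico, Finset.sum_Ico_add' (fun i => Z i ω), zero_add,
      Finset.Ico_add_one_right_eq_Icc]
  have hSmeas : ∀ t, Measurable (S t) := fun t => by
    rw [show S t = _ from funext (hS_range t)]
    exact Finset.measurable_sum _ fun i _ => hZmeas (i + 1)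
  have hψlim : Tendsto ψ atTop (𝓝 (P {ω | ∃ t, 1 ≤ t ∧ b0 ≤ S t ω})) := by
    simpa only [← hψ] using tendsto_measure_setOf_exists_le_atTop P fun i ω => b0 ≤ S i ω
  have hdrift : ∀ᵐ ω ∂P, Tendsto (S · ω) atTop atBot := by
    simpa only [← hS_range] using
      ae_tendsto_sum_range_atBot_of_integral_neg (X := fun i => Z (i + 1)) hint
        (fun i j hij => hindep.indepFun (by omega)) (fun i => hident (i + 1)) hmean
  have hthreshold := tendsto_measure_lt_of_ae_tendsto_atBot hSmeas hdrift (b0 - bε)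
  have hα_compl : ∀ t, α t = P {ω | S t ω ≤ b0 - bε ∧ ∀ i, 1 ≤ i → i ≤ t → S i ω < b0}ᶜ :=
    fun t => by rw [hα t, prob_compl_eq_one_sub (by measurability)]
  refine ⟨tendsto_of_tendsto_of_tendsto_of_le_of_le hψlim (by simpa using hψlim.add hthreshold)
    (fun t => ?_) (fun t => ?_), hψlim⟩
  · rw [hα_compl, hψ]
    exact measure_mono (setOf_exists_le_subset_compl_survival S b0 _ t)
  · rw [hα_compl, hψ]
    exact (measure_mono (compl_survival_subset S b0 _ t)).trans (measure_union_le _ _)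

/-- Theorem 2 (second part): under negative drift (`E[Z] < 0`), the resilience outage
probability converges, and its limit coincides with the limit of the ruin probability,
namely the probability of ultimate ruin `P(∃ t ≥ 1, S t ≥ b0)`. -/
theorem long_term_resilience_outage_neg_drift
    {Ω : Type*} [MeasurableSpace Ω] (P : Measure Ω) [IsProbabilityMeasure P]
    (Z : ℕ → Ω → ℝ) (hZmeas : ∀ i, Measurable (Z i))
    (hindep : ProbabilityTheory.iIndepFun Z P)
    (hident : ∀ i, ProbabilityTheory.IdentDistrib (Z i) (Z 1) P P)
    (hint : Integrable (Z 1) P)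
    (hmean : ∫ ω, Z 1 ω ∂P < 0)
    (S : ℕ → Ω → ℝ) (hS : ∀ t ω, S t ω = ∑ i ∈ Finset.Icc 1 t, Z i ω)
    (b0 bε : ℝ) (hb0 : 0 < b0) (hbε : 0 < bε) (hbε' : bε ≤ b0)
    (ψ : ℕ → ENNReal) (hψ : ∀ t, ψ t = P {ω | ∃ i, 1 ≤ i ∧ i ≤ t ∧ b0 ≤ S i ω})
    (α : ℕ → ENNReal)
    (hα : ∀ t, α t = 1 - P {ω | S t ω ≤ b0 - bε ∧ ∀ i, 1 ≤ i → i ≤ t → S i ω < b0}) :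
    Tendsto α atTop (nhds (P {ω | ∃ t, 1 ≤ t ∧ b0 ≤ S t ω})) ∧
    Tendsto ψ atTop (nhds (P {ω | ∃ t, 1 ≤ t ∧ b0 ≤ S t ω})) :=
  long_term_resilience_outage_neg_drift_general P Z hZmeas hindep hident hint hmean S hS b0 bε ψ hψ
    α hα
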